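/- In the preprojective algebra R = Π_{Ã_{n-1}}, the elements s_1 = Σ_{i=0}^{n-1} (α_i + α_i*) and s_2 = Σ_{i=0}^{n-1} (α_i α_{i+1} + α_i* α_{i−1}*) commute: s_1 s_2 = s_2 s_1. -/
import Mathlib


open scoped BigOperators

/-- Generators of the path algebra of the double of the extended Dynkin quiver Ã_{n-1}:
vertex idempotents `vtx i`, nonstar arrows `arr i : e_i → e_{i+1}`,
star arrows `star i : e_{i+1} → e_i`. -/
inductive PPGen (n : ℕ) : Type
  | vtx (i : ZMod n)
  | arr (i : ZMod n)
  | star (i : ZMod n)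

variable (K : Type) [Field K] (n : ℕ) [NeZero n]

abbrev PPFree := FreeAlgebra K (PPGen n)

noncomputable def E (i : ZMod n) : PPFree K n := FreeAlgebra.ι K (PPGen.vtx i)
noncomputable def A (i : ZMod n) : PPFree K n := FreeAlgebra.ι K (PPGen.arr i)
noncomputable def S (i : ZMod n) : PPFree K n := FreeAlgebra.ι K (PPGen.star i)

/-- Defining relations of the preprojective algebra Π_{Ã_{n-1}}: the path-algebra
relations for the double quiver, together with the preprojective relation
Ω = Σ_i (α_i α_i* − α_i* α_i) = 0. -/
inductive PPRel : PPFree K n → PPFree K n → Prop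
  | vtx_mul (i j : ZMod n) :
      PPRel (E K n i * E K n j) (if i = j then E K n i else 0)
  | vtx_sum : PPRel (∑ i : ZMod n, E K n i) 1
  | arr_left (i : ZMod n) : PPRel (E K n i * A K n i) (A K n i)
  | arr_right (i : ZMod n) : PPRel (A K n i * E K n (i + 1)) (A K n i)
  | arr_left' (i j : ZMod n) : j ≠ i → PPRel (E K n j * A K n i) 0
  | arr_right' (i j : ZMod n) : j ≠ i + 1 → PPRel (A K n i * E K n j) 0
  | star_left (i : ZMod n) : PPRel (E K n (i + 1) * S K n i) (S K n i)
  | star_right (i : ZMod n) : PPRel (S K n i * E K n i) (S K n i)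
  | star_left' (i j : ZMod n) : j ≠ i + 1 → PPRel (E K n j * S K n i) 0
  | star_right' (i j : ZMod n) : j ≠ i → PPRel (S K n i * E K n j) 0
  | preproj :
      PPRel (∑ i : ZMod n, (A K n i * S K n i - S K n i * A K n i)) 0

/-- The preprojective algebra Π_{Ã_{n-1}}. -/
abbrev Preproj := RingQuot (PPRel K n)

/-- The canonical projection from the free algebra onto Π_{Ã_{n-1}}. -/
noncomputable def pp : PPFree K n →ₐ[K] Preproj K n := RingQuot.mkAlgHom K (PPRel K n)

/-- `aPath i ℓ` is the pure nonstar path α_i α_{i+1} ⋯ α_{i+ℓ-1} (with `aPath i 0 = e_i`). -/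
noncomputable def aPath (i : ZMod n) : ℕ → PPFree K n
  | 0 => E K n i
  | (ℓ + 1) => A K n i * aPath (i + 1) ℓ

/-- `sPath j m` is the pure star path α_{j-1}* α_{j-2}* ⋯ α_{j-m}* starting at vertex j
(with `sPath j 0 = e_j`). -/
noncomputable def sPath (j : ZMod n) : ℕ → PPFree K n
  | 0 => E K n j
  | (m + 1) => S K n (j - 1) * sPath (j - 1) m

/-- The canonical-form path with source e_i consisting of ℓ nonstar arrows followed by
m star arrows, as an element of Π_{Ã_{n-1}}. -/
noncomputable def cpath (i : ZMod n) (ℓ m : ℕ) : Preproj K n :=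
  pp K n (aPath K n i ℓ * sPath K n (i + (ℓ : ZMod n)) m)

/-- The orbit sum O(ℓ,m): the sum over all paths in B_{ℓ,m} = Q_ℓQ_m* ∪ Q_mQ_ℓ*. -/
noncomputable def OO (ℓ m : ℕ) : Preproj K n :=
  if ℓ = m then ∑ i : ZMod n, cpath K n i ℓ ℓ
  else ∑ i : ZMod n, (cpath K n i ℓ m + cpath K n i m ℓ)

/-- s_1 = O(1,0) = Σ_i (α_i + α_i*). -/
noncomputable def s1 : Preproj K n := pp K n (∑ i : ZMod n, (A K n i + S K n i))

/-- s_2 = O(2,0) = Σ_i (α_i α_{i+1} + α_i* α_{i−1}*). -/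
noncomputable def s2 : Preproj K n :=
  pp K n (∑ i : ZMod n, (A K n i * A K n (i + 1) + S K n i * S K n (i - 1)))


section Aux

noncomputable def pe (i : ZMod n) : Preproj K n := pp K n (E K n i)
noncomputable def pa (i : ZMod n) : Preproj K n := pp K n (A K n i)
noncomputable def ps (i : ZMod n) : Preproj K n := pp K n (S K n i)

lemma ppRel_eq {x y : PPFree K n} (h : PPRel K n x y) : pp K n x = pp K n y :=
  RingQuot.mkAlgHom_rel K h

lemma ea (i j : ZMod n) : pe K n j * pa K n i = if j = i then pa K n i else 0 := by
  by_cases h : j = i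
  · subst h
    have := ppRel_eq K n (PPRel.arr_left (i := j))
    rw [map_mul] at this
    simp [pe, pa, this, if_pos rfl]
  · have := ppRel_eq K n (PPRel.arr_left' (i := i) (j := j) h)
    rw [map_mul] at this
    simp [pe, pa, this, if_neg h]

lemma ae (i j : ZMod n) : pa K n i * pe K n j = if j = i + 1 then pa K n i else 0 := by
  by_cases h : j = i + 1
  · subst h
    have := ppRel_eq K n (PPRel.arr_right (i := i))
    rw [map_mul] at this
    simp [pe, pa, this]
  · have := ppRel_eq K n (PPRel.arr_right' (i := i) (j := j) h)
    rw [map_mul] at this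
    simp [pe, pa, this, if_neg h]

lemma es (i j : ZMod n) : pe K n j * ps K n i = if j = i + 1 then ps K n i else 0 := by
  by_cases h : j = i + 1
  · subst h
    have := ppRel_eq K n (PPRel.star_left (i := i))
    rw [map_mul] at this
    simp [pe, ps, this]
  · have := ppRel_eq K n (PPRel.star_left' (i := i) (j := j) h)
    rw [map_mul] at this
    simp [pe, ps, this, if_neg h]

lemma se (i j : ZMod n) : ps K n i * pe K n j = if j = i then ps K n i else 0 := by
  by_cases h : j = i
  · subst h
    have := ppRel_eq K n (PPRel.star_right (i := j))
    rw [map_mul] at this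
    simp [pe, ps, this]
  · have := ppRel_eq K n (PPRel.star_right' (i := i) (j := j) h)
    rw [map_mul] at this
    simp [pe, ps, this, if_neg h]

lemma aa0 (i j : ZMod n) (h : j ≠ i + 1) : pa K n i * pa K n j = 0 := by
  have h1 : pe K n j * pa K n j = pa K n j := by rw [ea, if_pos rfl]
  calc pa K n i * pa K n j = pa K n i * (pe K n j * pa K n j) := by rw [h1]
    _ = (pa K n i * pe K n j) * pa K n j := (mul_assoc _ _ _).symm
    _ = 0 := by rw [ae, if_neg h, zero_mul]

lemma as0 (i j : ZMod n) (h : j ≠ i) : pa K n i * ps K n j = 0 := by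
  have h1 : pe K n (j + 1) * ps K n j = ps K n j := by rw [es, if_pos rfl]
  have h2 : (j : ZMod n) + 1 ≠ i + 1 := fun hc => h (by
    have := add_right_cancel hc; exact this)
  calc pa K n i * ps K n j = pa K n i * (pe K n (j + 1) * ps K n j) := by rw [h1]
    _ = (pa K n i * pe K n (j + 1)) * ps K n j := (mul_assoc _ _ _).symm
    _ = 0 := by rw [ae, if_neg h2, zero_mul]

lemma sa0 (i j : ZMod n) (h : j ≠ i) : ps K n i * pa K n j = 0 := by
  have h1 : pe K n j * pa K n j = pa K n j := by rw [ea, if_pos rfl]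
  calc ps K n i * pa K n j = ps K n i * (pe K n j * pa K n j) := by rw [h1]
    _ = (ps K n i * pe K n j) * pa K n j := (mul_assoc _ _ _).symm
    _ = 0 := by rw [se, if_neg h, zero_mul]

lemma ss0 (i j : ZMod n) (h : j ≠ i - 1) : ps K n i * ps K n j = 0 := by
  have h1 : pe K n (j + 1) * ps K n j = ps K n j := by rw [es, if_pos rfl]
  have h2 : (j : ZMod n) + 1 ≠ i := fun hc => h (by rw [← hc]; ring)
  calc ps K n i * ps K n j = ps K n i * (pe K n (j + 1) * ps K n j) := by rw [h1]
    _ = (ps K n i * pe K n (j + 1)) * ps K n j := (mul_assoc _ _ _).symm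
    _ = 0 := by rw [se, if_neg h2, zero_mul]

lemma preproj_sum :
    ∑ i : ZMod n, (pa K n i * ps K n i - ps K n i * pa K n i) = 0 := by
  have := ppRel_eq K n (PPRel.preproj (K := K) (n := n))
  rw [map_sum] at this
  simp only [map_sub, map_mul, map_zero] at this
  simpa [pa, ps] using this

lemma key (j : ZMod n) :
    pa K n j * ps K n j = ps K n (j - 1) * pa K n (j - 1) := by
  have h0 := preproj_sum K n
  have h1 : pe K n j * (∑ i : ZMod n, (pa K n i * ps K n i - ps K n i * pa K n i)) = 0 := by
    rw [h0, mul_zero]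
  rw [Finset.mul_sum] at h1
  simp only [mul_sub] at h1
  have hA : ∑ i : ZMod n, pe K n j * (pa K n i * ps K n i) = pa K n j * ps K n j := by
    rw [show pa K n j * ps K n j = pe K n j * (pa K n j * ps K n j) by
      rw [← mul_assoc, ea, if_pos rfl]]
    refine Fintype.sum_eq_single j (fun i hi => ?_)
    rw [← mul_assoc, ea, if_neg (Ne.symm hi), zero_mul]
  have hS : ∑ i : ZMod n, pe K n j * (ps K n i * pa K n i)
      = ps K n (j - 1) * pa K n (j - 1) := by
    rw [show ps K n (j-1) * pa K n (j-1) = pe K n j * (ps K n (j-1) * pa K n (j-1)) by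
      rw [← mul_assoc, es, if_pos (by ring)]]
    refine Fintype.sum_eq_single (j - 1) (fun i hi => ?_)
    have : (j : ZMod n) ≠ i + 1 := fun hc => hi (by rw [hc]; ring)
    rw [← mul_assoc, es, if_neg this, zero_mul]
  rw [Finset.sum_sub_distrib, hA, hS, sub_eq_zero] at h1
  exact h1

lemma s1_eq : s1 K n = ∑ i : ZMod n, (pa K n i + ps K n i) := by
  rw [s1, map_sum]
  simp [pa, ps]

lemma s2_eq : s2 K n = ∑ i : ZMod n, (pa K n i * pa K n (i + 1) + ps K n i * ps K n (i - 1)) := by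
  rw [s2, map_sum]
  simp [pa, ps]

lemma reindex_sub (f : ZMod n → Preproj K n) :
    ∑ i : ZMod n, f (i - 1) = ∑ i : ZMod n, f i :=
  Fintype.sum_equiv (Equiv.subRight (1 : ZMod n)) _ _ (fun i => rfl)

end Aux

/-- in Π_{Ã_{n-1}}, the elements s_1 = Σ_i (α_i + α_i*) and
s_2 = Σ_i (α_i α_{i+1} + α_i* α_{i−1}*) commute. -/
theorem statement10 (h3 : 3 ≤ n) : s1 K n * s2 K n = s2 K n * s1 K n := by
  have haaa : ∀ i : ZMod n, ∑ j : ZMod n, pa K n i * (pa K n j * pa K n (j + 1))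
      = pa K n i * (pa K n (i + 1) * pa K n (i + 1 + 1)) :=
    fun i => Fintype.sum_eq_single _ (fun j hj => by
      rw [← mul_assoc, aa0 K n i j hj, zero_mul])
  have hass : ∀ i : ZMod n, ∑ j : ZMod n, pa K n i * (ps K n j * ps K n (j - 1))
      = pa K n i * (ps K n i * ps K n (i - 1)) :=
    fun i => Fintype.sum_eq_single _ (fun j hj => by
      rw [← mul_assoc, as0 K n i j hj, zero_mul])
  have hsaa : ∀ i : ZMod n, ∑ j : ZMod n, ps K n i * (pa K n j * pa K n (j + 1))
      = ps K n i * (pa K n i * pa K n (i + 1)) :=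
    fun i => Fintype.sum_eq_single _ (fun j hj => by
      rw [← mul_assoc, sa0 K n i j hj, zero_mul])
  have hsss : ∀ i : ZMod n, ∑ j : ZMod n, ps K n i * (ps K n j * ps K n (j - 1))
      = ps K n i * (ps K n (i - 1) * ps K n (i - 1 - 1)) :=
    fun i => Fintype.sum_eq_single _ (fun j hj => by
      rw [← mul_assoc, ss0 K n i j hj, zero_mul])
  have haaa' : ∀ i : ZMod n, ∑ j : ZMod n, pa K n i * pa K n (i + 1) * pa K n j
      = pa K n i * (pa K n (i + 1) * pa K n (i + 1 + 1)) :=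
    fun i => by
      rw [← mul_assoc]
      refine Fintype.sum_eq_single _ (fun j hj => by
        rw [mul_assoc, aa0 K n (i + 1) j hj, mul_zero])
  have hass' : ∀ i : ZMod n, ∑ j : ZMod n, pa K n i * pa K n (i + 1) * ps K n j
      = pa K n i * (pa K n (i + 1) * ps K n (i + 1)) :=
    fun i => by
      rw [← mul_assoc]
      refine Fintype.sum_eq_single _ (fun j hj => by
        rw [mul_assoc, as0 K n (i + 1) j hj, mul_zero])
  have hsaa' : ∀ i : ZMod n, ∑ j : ZMod n, ps K n i * ps K n (i - 1) * pa K n j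
      = ps K n i * (ps K n (i - 1) * pa K n (i - 1)) :=
    fun i => by
      rw [← mul_assoc]
      refine Fintype.sum_eq_single _ (fun j hj => by
        rw [mul_assoc, sa0 K n (i - 1) j hj, mul_zero])
  have hsss' : ∀ i : ZMod n, ∑ j : ZMod n, ps K n i * ps K n (i - 1) * ps K n j
      = ps K n i * (ps K n (i - 1) * ps K n (i - 1 - 1)) :=
    fun i => by
      rw [← mul_assoc]
      refine Fintype.sum_eq_single _ (fun j hj => by
        rw [mul_assoc, ss0 K n (i - 1) j hj, mul_zero])
  have lhs_eq : s1 K n * s2 K n =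
      (∑ i : ZMod n, pa K n i * (pa K n (i + 1) * pa K n (i + 1 + 1)))
      + (∑ i : ZMod n, pa K n i * (ps K n i * ps K n (i - 1)))
      + (∑ i : ZMod n, ps K n i * (pa K n i * pa K n (i + 1)))
      + (∑ i : ZMod n, ps K n i * (ps K n (i - 1) * ps K n (i - 1 - 1))) := by
    rw [s1_eq, s2_eq, Finset.sum_mul_sum]
    simp only [add_mul, mul_add, Finset.sum_add_distrib]
    rw [Finset.sum_congr rfl (fun i _ => haaa i),
        Finset.sum_congr rfl (fun i _ => hass i),
        Finset.sum_congr rfl (fun i _ => hsaa i),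
        Finset.sum_congr rfl (fun i _ => hsss i)]
    abel
  have rhs_eq : s2 K n * s1 K n =
      (∑ i : ZMod n, pa K n i * (pa K n (i + 1) * pa K n (i + 1 + 1)))
      + (∑ i : ZMod n, pa K n i * (pa K n (i + 1) * ps K n (i + 1)))
      + (∑ i : ZMod n, ps K n i * (ps K n (i - 1) * pa K n (i - 1)))
      + (∑ i : ZMod n, ps K n i * (ps K n (i - 1) * ps K n (i - 1 - 1))) := by
    rw [s1_eq, s2_eq, Finset.sum_mul_sum]
    simp only [add_mul, mul_add, Finset.sum_add_distrib]
    rw [Finset.sum_congr rfl (fun i _ => haaa' i),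
        Finset.sum_congr rfl (fun i _ => hass' i),
        Finset.sum_congr rfl (fun i _ => hsaa' i),
        Finset.sum_congr rfl (fun i _ => hsss' i)]
    abel
  -- Now transform the middle sums using the preprojective relation.
  have hB : ∑ i : ZMod n, pa K n i * (ps K n i * ps K n (i - 1))
      = ∑ i : ZMod n, ps K n i * (pa K n i * ps K n i) := by
    have step : ∀ i : ZMod n, pa K n i * (ps K n i * ps K n (i - 1))
        = ps K n (i - 1) * (pa K n (i - 1) * ps K n (i - 1)) := fun i => by
      rw [← mul_assoc, key K n i, mul_assoc]
    rw [Finset.sum_congr rfl (fun i _ => step i)]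
    exact reindex_sub K n (fun i => ps K n i * (pa K n i * ps K n i))
  have hC : ∑ i : ZMod n, ps K n i * (pa K n i * pa K n (i + 1))
      = ∑ i : ZMod n, pa K n i * (ps K n i * pa K n i) := by
    have step : ∀ i : ZMod n, ps K n (i - 1) * (pa K n (i - 1) * pa K n (i - 1 + 1))
        = pa K n i * (ps K n i * pa K n i) := fun i => by
      have hk : ps K n (i - 1) * pa K n (i - 1) = pa K n i * ps K n i := (key K n i).symm
      rw [show (i : ZMod n) - 1 + 1 = i by ring, ← mul_assoc, hk, mul_assoc]
    rw [← reindex_sub K n (fun i => ps K n i * (pa K n i * pa K n (i + 1)))]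
    exact Finset.sum_congr rfl (fun i _ => step i)
  have hB' : ∑ i : ZMod n, pa K n i * (pa K n (i + 1) * ps K n (i + 1))
      = ∑ i : ZMod n, pa K n i * (ps K n i * pa K n i) := by
    refine Finset.sum_congr rfl (fun i _ => ?_)
    have hk := key K n (i + 1)
    rw [show (i : ZMod n) + 1 - 1 = i by ring] at hk
    rw [hk]
  have hC' : ∑ i : ZMod n, ps K n i * (ps K n (i - 1) * pa K n (i - 1))
      = ∑ i : ZMod n, ps K n i * (pa K n i * ps K n i) := by
    refine Finset.sum_congr rfl (fun i _ => ?_)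
    rw [← key K n i]
  rw [lhs_eq, rhs_eq, hB, hC, hB', hC']
  abel
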